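/- Let G be a finite simple graph whose adjacency matrix A_G has nullity one, and let x be a nonzero vector with A_G x = 0. If there exists a nonempty subset S ⊆ V(G) with Σ_{v∈S} x_v = 0 such that |S| is not equal to the degree of any vertex of G, then G satisfies the ACK property. -/

import Mathlib

/-!
The rows of `A_G` are orthogonal to `x`, and by rank–nullity the row space has codimension one,
so it is exactly the hyperplane `x^⊥`. Hence the indicator vector of `S` lies in the row space;
it is not a row, since its entries sum to `|S|` while the row of `v` sums to `deg v`.
-/

/-- A graph `G` satisfies the ACK property if there is a nonzero `{0,1}`-vector in the row
space of its adjacency matrix `A_G` (over `ℝ`) that is not equal to any row of `A_G`. -/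
def AckProp {V : Type} [Fintype V] (G : SimpleGraph V) [DecidableRel G.Adj] : Prop :=
  ∃ y : V → ℝ, y ≠ 0 ∧ (∀ v, y v = 0 ∨ y v = 1) ∧
    y ∈ Submodule.span ℝ (Set.range fun i => (G.adjMatrix ℝ) i) ∧
    ∀ i, y ≠ (G.adjMatrix ℝ) i

open Matrix Module

namespace Matrix

variable {K m n : Type*} [Field K] [Fintype m] [Fintype n]

theorem range_dotProductBilin_eq_top {x : n → K} (hx : x ≠ 0) :
    LinearMap.range (dotProductBilin K K x) = ⊤ := by
  classical
  obtain ⟨v, hv⟩ := Function.ne_iff.mp hx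
  refine LinearMap.range_eq_top.mpr fun c => ⟨Pi.single v (c / x v), ?_⟩
  simp [mul_div_cancel₀ c hv]

theorem span_row_eq_ker_dotProductBilin {A : Matrix m n K}
    (hnull : finrank K (LinearMap.ker A.mulVecLin) = 1) {x : n → K} (hx : x ≠ 0)
    (hker : A *ᵥ x = 0) :
    Submodule.span K (Set.range A.row) = LinearMap.ker (dotProductBilin K K x) := by
  have hle : Submodule.span K (Set.range A.row) ≤ LinearMap.ker (dotProductBilin K K x) := by
    rw [Submodule.span_le]
    rintro _ ⟨i, rfl⟩
    rw [SetLike.mem_coe, LinearMap.mem_ker, dotProductBilin_apply_apply, dotProduct_comm]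
    exact congrFun hker i
  refine Submodule.eq_of_le_of_finrank_eq hle ?_
  have hA := LinearMap.finrank_range_add_finrank_ker A.mulVecLin
  have hdot := LinearMap.finrank_range_add_finrank_ker (dotProductBilin K K x)
  rw [range_dotProductBilin_eq_top hx, finrank_top, finrank_self] at hdot
  rw [← rank_eq_finrank_span_row, rank]
  omega

end Matrix

theorem ackProp_of_indicator_mem_span_rows {V : Type} [Fintype V] (G : SimpleGraph V)
    [DecidableRel G.Adj] (S : Finset V) (hS : S.Nonempty)
    (hspan : (S : Set V).indicator 1 ∈ Submodule.span ℝ (Set.range fun i => (G.adjMatrix ℝ) i))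
    (hdeg : ∀ v, S.card ≠ G.degree v) :
    AckProp G := by
  refine ⟨_, ?_, fun v => ?_, hspan, fun i hi => hdeg i ?_⟩
  · obtain ⟨v, hv⟩ := hS
    exact Function.ne_iff.mpr ⟨v, by simp [hv]⟩
  · by_cases hv : v ∈ S <;> simp [hv]
  · have hsums : (S : Set V).indicator 1 ⬝ᵥ (1 : V → ℝ) = G.adjMatrix ℝ i ⬝ᵥ 1 := by rw [hi]
    rw [SimpleGraph.adjMatrix_dotProduct, dotProduct_one,
      Finset.sum_indicator_subset _ (Finset.subset_univ S)] at hsums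
    simpa using hsums

theorem ackProp_of_zero_sum_subset_card_ne_degree {V : Type} [Fintype V]
    (G : SimpleGraph V) [DecidableRel G.Adj]
    (hnull : Module.finrank ℝ ↥(LinearMap.ker (G.adjMatrix ℝ).mulVecLin) = 1)
    (x : V → ℝ) (hx : x ≠ 0) (hker : (G.adjMatrix ℝ).mulVec x = 0)
    (S : Finset V) (hS : S.Nonempty) (hsum : ∑ v ∈ S, x v = 0)
    (hdeg : ∀ v, S.card ≠ G.degree v) :
    AckProp G := by
  refine ackProp_of_indicator_mem_span_rows G S hS ?_ hdeg
  change _ ∈ Submodule.span ℝ (Set.range (G.adjMatrix ℝ).row)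
  rw [span_row_eq_ker_dotProductBilin hnull hx hker, LinearMap.mem_ker,
    dotProductBilin_apply_apply, dotProduct_comm, ← hsum]
  simp only [dotProduct, ← Set.indicator_mul_left, Pi.one_apply, one_mul]
  exact Finset.sum_indicator_subset _ (Finset.subset_univ S)
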